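/- For the half-line graph V = {0,1,2,...} with edges k ∼ k+1, edge weights b(k,k+1) = 1, and vertex weights μ ≡ 1, the operator Δ²u + Wu with W(k) = −k is essentially self-adjoint on the finitely supported functions in ℓ²(V). -/

import Mathlib

/-- The graph Laplacian on the half-line graph `ℕ` with edges `k ∼ k+1`, unit edge
and vertex weights: `(Δu)(x) = Σ_{y∼x} (u x − u y)`. -/
def lapHalfLine (u : ℕ → ℂ) : ℕ → ℂ
  | 0 => u 0 - u 1
  | n + 1 => 2 * u (n + 1) - u n - u (n + 2)

/-!
Pair the eigenvalue equation `Δ²u - k u = iν u` with `u ∈ ℓ²`. Summation by parts shows that `Δ`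
is symmetric on `ℓ²` (the boundary term at infinity vanishes since `ℓ²` sequences tend to `0`), so
`⟨Δ²u, u⟩ = ‖Δu‖²` is real, and `⟨k u, u⟩` is real termwise; the imaginary part of the paired
equation is therefore `ν ‖u‖² = 0`.
-/

open Filter Topology ComplexConjugate

lemma summable_mul_conj_of_summable_sq_norm {ι 𝕜 : Type*} [RCLike 𝕜] {a b : ι → 𝕜}
    (ha : Summable fun i => ‖a i‖ ^ 2) (hb : Summable fun i => ‖b i‖ ^ 2) :
    Summable fun i => a i * conj (b i) := by
  refine Summable.of_norm (Summable.of_nonneg_of_le (fun i => norm_nonneg _) (fun i => ?_)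
    ((ha.add hb).div_const 2))
  rw [norm_mul, RCLike.norm_conj]
  nlinarith [sq_nonneg (‖a i‖ - ‖b i‖)]

lemma tendsto_zero_of_summable_sq_norm {E : Type*} [SeminormedAddCommGroup E] {u : ℕ → E} (hu : Summable fun n => ‖u n‖ ^ 2) :
    Tendsto u atTop (𝓝 0) := by
  rw [tendsto_zero_iff_norm_tendsto_zero]
  simpa [Function.comp_def, Real.sqrt_sq (norm_nonneg _)] using
    (Real.continuous_sqrt.tendsto 0).comp hu.tendsto_atTop_zero

lemma Summable.tsum_sub_succ {G : Type*} [AddCommGroup G] [TopologicalSpace G]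
    [IsTopologicalAddGroup G] [T2Space G] {f : ℕ → G} {l : G}
    (hs : Summable fun n => f n - f (n + 1)) (hf : Tendsto f atTop (𝓝 l)) :
    ∑' n, (f n - f (n + 1)) = f 0 - l := by
  refine tendsto_nhds_unique hs.hasSum.tendsto_sum_nat ?_
  simp_rw [Finset.sum_range_sub']
  exact tendsto_const_nhds.sub hf

/-- The boundary term of summation by parts for `lapHalfLine`; it vanishes at `0` since
`0 - 1 = 0` in `ℕ`. -/
def lapHalfLineFlux (v w : ℕ → ℂ) (n : ℕ) : ℂ :=
  v n * conj (w (n - 1)) - v (n - 1) * conj (w n)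

lemma lapHalfLine_mul_conj_sub_mul_conj_lapHalfLine (v w : ℕ → ℂ) (n : ℕ) :
    lapHalfLine v n * conj (w n) - v n * conj (lapHalfLine w n)
      = lapHalfLineFlux v w n - lapHalfLineFlux v w (n + 1) := by
  cases n <;> simp only [lapHalfLine, lapHalfLineFlux, map_sub, map_mul, map_ofNat,
    Nat.zero_sub, Nat.add_sub_cancel] <;> ring

lemma norm_lapHalfLine_le (u : ℕ → ℂ) (n : ℕ) :
    ‖lapHalfLine u n‖ ≤ 2 * ‖u n‖ + ‖u (n - 1)‖ + ‖u (n + 1)‖ := by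
  cases n with
  | zero =>
    have := norm_sub_le (u 0) (u 1)
    simp only [lapHalfLine, Nat.zero_sub]
    linarith [norm_nonneg (u 0)]
  | succ n =>
    calc ‖2 * u (n + 1) - u n - u (n + 2)‖
        ≤ ‖2 * u (n + 1)‖ + ‖u n‖ + ‖u (n + 2)‖ := norm_sub_le_of_le (norm_sub_le _ _) le_rfl
      _ = 2 * ‖u (n + 1)‖ + ‖u n‖ + ‖u (n + 2)‖ := by rw [norm_mul, Complex.norm_ofNat]

lemma summable_sq_norm_lapHalfLine {u : ℕ → ℂ} (hu : Summable fun n => ‖u n‖ ^ 2) :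
    Summable fun n => ‖lapHalfLine u n‖ ^ 2 := by
  have hpred : Summable fun n => ‖u (n - 1)‖ ^ 2 :=
    (summable_nat_add_iff 1).mp (by simpa using hu)
  have hsucc : Summable fun n => ‖u (n + 1)‖ ^ 2 := (summable_nat_add_iff 1).mpr hu
  refine Summable.of_nonneg_of_le (fun n => sq_nonneg _) (fun n => ?_)
    (((hu.add hpred).add hsucc).mul_left 6)
  have := norm_lapHalfLine_le u n
  nlinarith [norm_nonneg (lapHalfLine u n), norm_nonneg (u n), norm_nonneg (u (n - 1)),
    norm_nonneg (u (n + 1)), sq_nonneg (‖u n‖ - 2 * ‖u (n - 1)‖),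
    sq_nonneg (‖u n‖ - 2 * ‖u (n + 1)‖), sq_nonneg (‖u (n - 1)‖ - ‖u (n + 1)‖)]

lemma tendsto_lapHalfLineFlux {v w : ℕ → ℂ} (hv : Tendsto v atTop (𝓝 0))
    (hw : Tendsto w atTop (𝓝 0)) : Tendsto (lapHalfLineFlux v w) atTop (𝓝 0) := by
  have hwc : Tendsto (fun n => conj (w n)) atTop (𝓝 0) := by
    simpa [Function.comp_def] using (Complex.continuous_conj.tendsto 0).comp hw
  have hpred {f : ℕ → ℂ} (hf : Tendsto f atTop (𝓝 0)) : Tendsto (fun n => f (n - 1)) atTop (𝓝 0) :=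
    hf.comp (tendsto_sub_atTop_nat 1)
  have h := (hv.mul (hpred hwc)).sub ((hpred hv).mul hwc)
  rw [mul_zero, sub_zero] at h
  exact h

lemma tsum_lapHalfLine_mul_conj {v w : ℕ → ℂ} (hv : Summable fun n => ‖v n‖ ^ 2)
    (hw : Summable fun n => ‖w n‖ ^ 2) :
    ∑' n, lapHalfLine v n * conj (w n) = ∑' n, v n * conj (lapHalfLine w n) := by
  have hl := summable_mul_conj_of_summable_sq_norm (summable_sq_norm_lapHalfLine hv) hw
  have hr := summable_mul_conj_of_summable_sq_norm hv (summable_sq_norm_lapHalfLine hw)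
  have hflux := (hl.sub hr).congr (lapHalfLine_mul_conj_sub_mul_conj_lapHalfLine v w)
  rw [← sub_eq_zero, ← hl.tsum_sub hr]
  simp_rw [lapHalfLine_mul_conj_sub_mul_conj_lapHalfLine]
  rw [hflux.tsum_sub_succ (tendsto_lapHalfLineFlux (tendsto_zero_of_summable_sq_norm hv)
    (tendsto_zero_of_summable_sq_norm hw))]
  simp [lapHalfLineFlux]

/-- For the half-line graph with `b(k,k+1)=1`, `μ ≡ 1`, the operator
`Δ²u + Wu` with `W(k) = −k` is essentially self-adjoint on the finitely supported
functions in `ℓ²(ℕ)`.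

Essential self-adjointness is formalized via the deficiency-index criterion: for every
`ν ≠ 0`, the only `u ∈ ℓ²` with `Δ²u + Wu ∈ ℓ²` and `Δ²u + Wu = iνu` is `u = 0`. -/
theorem halfLine_biLaplacian_essentially_selfAdjoint :
    ∀ ν : ℝ, ν ≠ 0 → ∀ u : ℕ → ℂ,
      (Summable fun n => ‖u n‖ ^ 2) →
      (Summable fun n => ‖lapHalfLine (lapHalfLine u) n - (n : ℂ) * u n‖ ^ 2) →
      (∀ n, lapHalfLine (lapHalfLine u) n - (n : ℂ) * u n = (ν : ℂ) * Complex.I * u n) →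
      u = 0 := by
  intro ν hν u hu _ heq
  have hΔu := summable_sq_norm_lapHalfLine hu
  have hpair := summable_mul_conj_of_summable_sq_norm (summable_sq_norm_lapHalfLine hΔu) hu
  have hreal : ∑' n, lapHalfLine (lapHalfLine u) n * conj (u n)
      = ((∑' n, ‖lapHalfLine u n‖ ^ 2 : ℝ) : ℂ) := by
    rw [tsum_lapHalfLine_mul_conj hΔu hu, Complex.ofReal_tsum]
    simp_rw [Complex.mul_conj', Complex.ofReal_pow]
  have him (n : ℕ) : (lapHalfLine (lapHalfLine u) n * conj (u n)).im = ν * ‖u n‖ ^ 2 := by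
    have heigen : lapHalfLine (lapHalfLine u) n = ((n : ℂ) + ν * Complex.I) * u n := by
      linear_combination heq n
    rw [heigen, mul_assoc, Complex.mul_conj', ← Complex.ofReal_pow, Complex.mul_im,
      Complex.ofReal_re, Complex.ofReal_im]
    simp
  have hνsum : HasSum (fun n => ν * ‖u n‖ ^ 2) 0 := by
    simpa only [him, hreal, Complex.ofReal_im] using Complex.hasSum_im hpair.hasSum
  have hsum : HasSum (fun n => ‖u n‖ ^ 2) 0 := by
    simpa [hν] using hνsum.mul_left ν⁻¹
  funext n
  simpa using congrFun ((hasSum_zero_iff_of_nonneg fun n => sq_nonneg ‖u n‖).mp hsum) n
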